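/- arXiv:2604.00133 — 4 statements merged into one kernel-verified Lean document; each statement's English description precedes it below -/
import Mathlib

section
/- Under randomization, consistency, monotonicity, and partial principal ignorability, with discrete X and ρ_z(x) = P(S=1 | Z=z, X=x), μ_zs(x) = E[Y | Z=z, S=s, X=x], ρ̄_0 = P(S=1 | Z=0): E[Y(1) | S(0)=1] = Σ_x (ρ_0(x)/ρ̄_0)·[μ_11(x)·(ρ_1(x)/ρ_0(x)) + μ_10(x)·(1 − ρ_1(x)/ρ_0(x))]·P(X=x). -/
open MeasureTheory ProbabilityTheory

/-- Probability of an event as a real number. -/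
noncomputable def Pr {Ω : Type*} [MeasurableSpace Ω] (μ : Measure Ω) (A : Set Ω) : ℝ :=
  (μ A).toReal

/-- Conditional expectation of `Y` given the event `A` (as a ratio). -/
noncomputable def cexp {Ω : Type*} [MeasurableSpace Ω] (μ : Measure Ω) (Y : Ω → ℝ)
    (A : Set Ω) : ℝ :=
  (∫ ω in A, Y ω ∂μ) / Pr μ A

/-!
Monotonicity splits the naturally infected `{S(0) = 1}`, up to a null set, into the
always-infected `{S(1) = 1}` and the protected `{S(0) = 1, S(1) = 0}`. Within `{X = x}`,
partial principal ignorability gives the protected stratum the `Y(1)`-mean of `{S(1) = 0}`,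
so that, writing `pₛ(x) = P(S(s) = 1, X = x)`,
`E[Y(1); S(0) = 1, X = x] = μ₁₁(x) p₁(x) + μ₁₀(x) (p₀(x) - p₁(x))`.
Randomization and consistency identify every term with its observed counterpart
(`p_z(x) = ρ_z(x) P(X = x)`, `ρ̄₀ = P(S(0) = 1)`); summing over the values of `X`
gives the formula.
-/

section

variable {Ω : Type*} [MeasurableSpace Ω] {μ : Measure Ω}

lemma cexp_mul_Pr [IsFiniteMeasure μ] (Y : Ω → ℝ) (A : Set Ω) :
    cexp μ Y A * Pr μ A = ∫ ω in A, Y ω ∂μ := by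
  rcases eq_or_ne (Pr μ A) 0 with hA | hA
  · rw [Measure.restrict_eq_zero.2 ((measureReal_eq_zero_iff (measure_ne_top μ A)).1 hA),
      integral_zero_measure, hA, mul_zero]
  · exact div_mul_cancel₀ _ hA

-- The hypothesis makes the laws of `Y` on `D ∩ C` and on `C` proportional; integrate `id`
-- against both.
lemma setIntegral_inter_eq_cexp_mul_Pr [IsFiniteMeasure μ] {Y : Ω → ℝ} (hY : Measurable Y)
    {C D : Set Ω}
    (h : ∀ B, MeasurableSet B → μ (Y ⁻¹' B ∩ D ∩ C) * μ C = μ (Y ⁻¹' B ∩ C) * μ (D ∩ C)) :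
    ∫ ω in D ∩ C, Y ω ∂μ = cexp μ Y C * Pr μ (D ∩ C) := by
  have hlaw : μ C • (μ.restrict (D ∩ C)).map Y = μ (D ∩ C) • (μ.restrict C).map Y := by
    ext B hB
    simp only [Measure.smul_apply, smul_eq_mul, Measure.map_apply hY hB,
      Measure.restrict_apply (hY hB)]
    rw [mul_comm, ← Set.inter_assoc, h B hB, mul_comm]
  have hmean := congrArg (fun ν : Measure ℝ => ∫ y, y ∂ν) hlaw
  simp only [integral_smul_measure, smul_eq_mul] at hmean
  have hmap : ∀ E, ∫ y, y ∂(μ.restrict E).map Y = ∫ ω in E, Y ω ∂μ := fun _ =>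
    integral_map hY.aemeasurable aestronglyMeasurable_id
  rw [hmap, hmap, ← Pr, ← Pr] at hmean
  rcases eq_or_ne (Pr μ C) 0 with hC | hC
  · have hDC : μ (D ∩ C) = 0 :=
      measure_mono_null Set.inter_subset_right ((measureReal_eq_zero_iff (measure_ne_top μ C)).1 hC)
    rw [Measure.restrict_eq_zero.2 hDC, integral_zero_measure, Pr, hDC, ENNReal.toReal_zero,
      mul_zero]
  · rw [cexp, div_mul_eq_mul_div, eq_div_iff hC]
    linarith

lemma inter_ae_eq_right_of_ae_le {A B : Set Ω} (hBA : B ≤ᵐ[μ] A) : (A ∩ B : Set Ω) =ᵐ[μ] B :=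
  Filter.EventuallyLE.antisymm (Filter.Eventually.of_forall fun _ => And.right)
    (hBA.mono fun _ h hb => ⟨h hb, hb⟩)

lemma setIntegral_eq_add_sdiff_of_ae_le {f : Ω → ℝ} {A B : Set Ω} (hB : MeasurableSet B)
    (hBA : B ≤ᵐ[μ] A) (hf : IntegrableOn f A μ) :
    ∫ ω in A, f ω ∂μ = ∫ ω in B, f ω ∂μ + ∫ ω in A \ B, f ω ∂μ := by
  rw [← integral_inter_add_sdiff hB hf, setIntegral_congr_set (inter_ae_eq_right_of_ae_le hBA)]

lemma Pr_eq_add_sdiff_of_ae_le [IsFiniteMeasure μ] {A B : Set Ω} (hB : MeasurableSet B)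
    (hBA : B ≤ᵐ[μ] A) : Pr μ A = Pr μ B + Pr μ (A \ B) := by
  show μ.real A = μ.real B + μ.real (A \ B)
  rw [← measureReal_inter_add_sdiff hB, measureReal_congr (inter_ae_eq_right_of_ae_le hBA)]

section Randomization

variable {α β : Type*} [MeasurableSpace α] [MeasurableSpace β] {Z : Ω → α} {V : Ω → β}
  {s : Set α} {t t' : Set β}

lemma Pr_preimage_inter_of_indepFun (h : IndepFun Z V μ) (hs : MeasurableSet s)
    (ht : MeasurableSet t) : Pr μ (Z ⁻¹' s ∩ V ⁻¹' t) = Pr μ (Z ⁻¹' s) * Pr μ (V ⁻¹' t) := by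
  rw [Pr, indepFun_iff_measure_inter_preimage_eq_mul.1 h s t hs ht, ENNReal.toReal_mul]
  rfl

lemma Pr_preimage_inter_div_of_indepFun (h : IndepFun Z V μ) (hs : MeasurableSet s)
    (ht : MeasurableSet t) (ht' : MeasurableSet t') (hne : Pr μ (Z ⁻¹' s ∩ V ⁻¹' t') ≠ 0) :
    Pr μ (Z ⁻¹' s ∩ V ⁻¹' t) / Pr μ (Z ⁻¹' s ∩ V ⁻¹' t') = Pr μ (V ⁻¹' t) / Pr μ (V ⁻¹' t') := by
  rw [Pr_preimage_inter_of_indepFun h hs ht'] at hne ⊢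
  rw [Pr_preimage_inter_of_indepFun h hs ht]
  exact mul_div_mul_left _ _ (left_ne_zero_of_mul hne)

lemma setIntegral_preimage_inter_of_indepFun (h : IndepFun Z V μ) (hZ : Measurable Z)
    (hV : Measurable V) {f : β → ℝ} (hf : Measurable f) (hs : MeasurableSet s)
    (ht : MeasurableSet t) :
    ∫ ω in Z ⁻¹' s ∩ V ⁻¹' t, f (V ω) ∂μ = Pr μ (Z ⁻¹' s) * ∫ ω in V ⁻¹' t, f (V ω) ∂μ := by
  have h := ((IndepFun_iff_Indep Z V μ).1 h).setIntegral_eq_mul hZ.comap_le hV.aemeasurable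
    ⟨s, hs, rfl⟩ (hf.indicator ht).aestronglyMeasurable
  simp_rw [← Set.indicator_comp_right] at h
  rwa [setIntegral_indicator (hV ht), integral_indicator (hV ht)] at h

lemma cexp_preimage_inter_of_indepFun (h : IndepFun Z V μ) (hZ : Measurable Z)
    (hV : Measurable V) {f : β → ℝ} (hf : Measurable f) (hs : MeasurableSet s)
    (ht : MeasurableSet t) (hne : Pr μ (Z ⁻¹' s) ≠ 0) :
    cexp μ (fun ω => f (V ω)) (Z ⁻¹' s ∩ V ⁻¹' t) = cexp μ (fun ω => f (V ω)) (V ⁻¹' t) := by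
  rw [cexp, cexp, setIntegral_preimage_inter_of_indepFun h hZ hV hf hs ht,
    Pr_preimage_inter_of_indepFun h hs ht, mul_div_mul_left _ _ hne]

end Randomization

lemma hasSum_setIntegral_fiber_inter {γ : Type*} [MeasurableSpace γ]
    [MeasurableSingletonClass γ] [Countable γ] {X : Ω → γ} (hX : Measurable X) {f : Ω → ℝ}
    {A : Set Ω} (hA : MeasurableSet A) (hf : IntegrableOn f A μ) :
    HasSum (fun x => ∫ ω in {ω | X ω = x} ∩ A, f ω ∂μ) (∫ ω in A, f ω ∂μ) := by
  have hU : (⋃ x, {ω | X ω = x} ∩ A) = A := by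
    ext ω
    simp
  have hd : Pairwise (Function.onFun Disjoint fun x => {ω | X ω = x} ∩ A) := fun x y hxy =>
    ((Set.disjoint_singleton.2 hxy).preimage X).mono Set.inter_subset_left Set.inter_subset_left
  simpa only [hU] using hasSum_integral_iUnion (s := fun x => {ω | X ω = x} ∩ A)
    (fun x => (hX (measurableSet_singleton x)).inter hA) hd (by rwa [hU])

lemma setIntegral_eq_principal_strata [IsFiniteMeasure μ] {S0 S1 Y1 : Ω → ℝ} {E : Set Ω}
    (hE : MeasurableSet E) (hS1m : Measurable S1) (hY1m : Measurable Y1)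
    (hS0 : ∀ ω, S0 ω = 0 ∨ S0 ω = 1) (hS1 : ∀ ω, S1 ω = 0 ∨ S1 ω = 1)
    (hmono : ∀ᵐ ω ∂μ, S1 ω ≤ S0 ω) (hint : Integrable Y1 μ)
    (hPPI : ∀ B, MeasurableSet B →
      μ (Y1 ⁻¹' B ∩ {ω | S0 ω = 1} ∩ (E ∩ {ω | S1 ω = 0})) * μ (E ∩ {ω | S1 ω = 0})
        = μ (Y1 ⁻¹' B ∩ (E ∩ {ω | S1 ω = 0})) * μ ({ω | S0 ω = 1} ∩ (E ∩ {ω | S1 ω = 0}))) :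
    ∫ ω in E ∩ {ω | S0 ω = 1}, Y1 ω ∂μ
      = cexp μ Y1 (E ∩ {ω | S1 ω = 1}) * Pr μ (E ∩ {ω | S1 ω = 1})
        + cexp μ Y1 (E ∩ {ω | S1 ω = 0})
          * (Pr μ (E ∩ {ω | S0 ω = 1}) - Pr μ (E ∩ {ω | S1 ω = 1})) := by
  have hB : MeasurableSet (E ∩ {ω | S1 ω = 1}) := hE.inter (hS1m (measurableSet_singleton 1))
  have hBA : (E ∩ {ω | S1 ω = 1} : Set Ω) ≤ᵐ[μ] (E ∩ {ω | S0 ω = 1} : Set Ω) := by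
    filter_upwards [hmono] with ω hle ⟨hω, h1⟩
    refine ⟨hω, (hS0 ω).resolve_left fun h0 => ?_⟩
    linarith [show S1 ω = 1 from h1]
  have hdiff : ((E ∩ {ω | S0 ω = 1}) \ (E ∩ {ω | S1 ω = 1}) : Set Ω)
      = {ω | S0 ω = 1} ∩ (E ∩ {ω | S1 ω = 0}) := by
    ext ω
    rcases hS1 ω with h | h <;> simp [h] <;> tauto
  rw [setIntegral_eq_add_sdiff_of_ae_le hB hBA hint.integrableOn,
    Pr_eq_add_sdiff_of_ae_le hB hBA, hdiff, cexp_mul_Pr,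
    setIntegral_inter_eq_cexp_mul_Pr hY1m hPPI]
  ring

section Identification

variable {γ : Type*} [MeasurableSpace γ] [MeasurableSingletonClass γ] {X : Ω → γ}
  {Z S Sz : Ω → ℝ} {z : ℝ} {x : γ}

lemma Pr_arm_div_eq_of_indepFun (h : IndepFun Z Sz μ) (hcons : ∀ ω, Z ω = z → S ω = Sz ω)
    (hz : Pr μ {ω | Z ω = z} ≠ 0) :
    Pr μ {ω | S ω = 1 ∧ Z ω = z} / Pr μ {ω | Z ω = z} = Pr μ {ω | Sz ω = 1} := by
  have hA : {ω | S ω = 1 ∧ Z ω = z} = Z ⁻¹' {z} ∩ Sz ⁻¹' {1} := by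
    ext ω
    by_cases hZ : Z ω = z <;> simp [hZ, hcons ω]
  rw [hA, Pr_preimage_inter_of_indepFun h (measurableSet_singleton z) (measurableSet_singleton 1)]
  exact mul_div_cancel_left₀ _ hz

lemma Pr_arm_inter_div_eq_of_indepFun (h : IndepFun Z (fun ω => (X ω, Sz ω)) μ)
    (hcons : ∀ ω, Z ω = z → S ω = Sz ω) (hz : Pr μ {ω | Z ω = z ∧ X ω = x} ≠ 0) :
    Pr μ {ω | S ω = 1 ∧ Z ω = z ∧ X ω = x} / Pr μ {ω | Z ω = z ∧ X ω = x}
      = Pr μ ({ω | X ω = x} ∩ {ω | Sz ω = 1}) / Pr μ {ω | X ω = x} := by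
  have hA : {ω | S ω = 1 ∧ Z ω = z ∧ X ω = x}
      = Z ⁻¹' {z} ∩ (fun ω => (X ω, Sz ω)) ⁻¹' {p | p.1 = x ∧ p.2 = 1} := by
    ext ω
    by_cases hZ : Z ω = z <;> simp [hZ, hcons ω, and_comm]
  rw [hA]
  exact Pr_preimage_inter_div_of_indepFun (t' := {p : γ × ℝ | p.1 = x}) h
    (measurableSet_singleton z) (by measurability) (by measurability) hz

lemma cexp_arm_eq_of_indepFun {Y Yz : Ω → ℝ} (h : IndepFun Z (fun ω => (X ω, Sz ω, Yz ω)) μ)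
    (hZ : Measurable Z) (hX : Measurable X) (hSz : Measurable Sz) (hYz : Measurable Yz)
    (hconsS : ∀ ω, Z ω = z → S ω = Sz ω) (hconsY : ∀ ω, Z ω = z → Y ω = Yz ω)
    (hz : Pr μ {ω | Z ω = z ∧ X ω = x} ≠ 0) (s : ℝ) :
    cexp μ Y {ω | Z ω = z ∧ S ω = s ∧ X ω = x}
      = cexp μ Yz ({ω | X ω = x} ∩ {ω | Sz ω = s}) := by
  set V := fun ω => (X ω, Sz ω, Yz ω)
  have hV : Measurable V := by fun_prop
  have hZz : Pr μ (Z ⁻¹' {z}) ≠ 0 := by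
    have hfac : Pr μ {ω | Z ω = z ∧ X ω = x} = Pr μ (Z ⁻¹' {z}) * Pr μ (V ⁻¹' {p | p.1 = x}) :=
      Pr_preimage_inter_of_indepFun (t := {p : γ × ℝ × ℝ | p.1 = x}) h (measurableSet_singleton z)
        (by measurability)
    exact left_ne_zero_of_mul (hfac ▸ hz)
  have hA : {ω | Z ω = z ∧ S ω = s ∧ X ω = x} = Z ⁻¹' {z} ∩ V ⁻¹' {p | p.1 = x ∧ p.2.1 = s} := by
    ext ω
    by_cases hZ : Z ω = z <;> simp [V, hZ, hconsS ω, and_comm]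
  have hAm : MeasurableSet (Z ⁻¹' {z} ∩ V ⁻¹' {p | p.1 = x ∧ p.2.1 = s}) :=
    (hZ (measurableSet_singleton z)).inter (hV (by measurability))
  rw [hA, cexp, setIntegral_congr_fun hAm fun ω hω => hconsY ω hω.1, ← cexp]
  exact cexp_preimage_inter_of_indepFun (f := fun p => p.2.2) h hZ hV (by fun_prop)
    (measurableSet_singleton z) (by measurability) hZz

end Identification

end

theorem id_EY1_naturally_infected_PPI_general
    {Ω : Type*} [MeasurableSpace Ω] (μ : Measure Ω) [IsProbabilityMeasure μ]
    (X : Ω → ℕ) (Z S0 S1 Y0 Y1 S Y : Ω → ℝ)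
    (ρF0 ρF1 m11 m10 : ℕ → ℝ) (rbar0 : ℝ)
    (hXm : Measurable X) (hZm : Measurable Z)
    (hS0m : Measurable S0) (hS1m : Measurable S1)
    (hY1m : Measurable Y1)
    (hS0 : ∀ ω, S0 ω = 0 ∨ S0 ω = 1) (hS1 : ∀ ω, S1 ω = 0 ∨ S1 ω = 1)
    (hindep : IndepFun Z (fun ω => (X ω, S0 ω, S1 ω, Y0 ω, Y1 ω)) μ)
    (hconsS : ∀ ω, S ω = if Z ω = 1 then S1 ω else S0 ω)
    (hconsY : ∀ ω, Y ω = if Z ω = 1 then Y1 ω else Y0 ω)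
    (hmono : ∀ᵐ ω ∂μ, S1 ω ≤ S0 ω)
    (hint : Integrable Y1 μ)
    (hPPI : ∀ (x : ℕ) (B : Set ℝ), MeasurableSet B → ∀ s₀ : ℝ,
      μ ({ω | Y1 ω ∈ B ∧ S0 ω = s₀} ∩ {ω | X ω = x ∧ S1 ω = 0})
          * μ {ω | X ω = x ∧ S1 ω = 0}
        = μ ({ω | Y1 ω ∈ B} ∩ {ω | X ω = x ∧ S1 ω = 0})
          * μ ({ω | S0 ω = s₀} ∩ {ω | X ω = x ∧ S1 ω = 0}))
    (hρF0 : ∀ x, ρF0 x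
      = Pr μ {ω | S ω = 1 ∧ Z ω = 0 ∧ X ω = x} / Pr μ {ω | Z ω = 0 ∧ X ω = x})
    (hρF1 : ∀ x, ρF1 x
      = Pr μ {ω | S ω = 1 ∧ Z ω = 1 ∧ X ω = x} / Pr μ {ω | Z ω = 1 ∧ X ω = x})
    (hm11 : ∀ x, m11 x = cexp μ Y {ω | Z ω = 1 ∧ S ω = 1 ∧ X ω = x})
    (hm10 : ∀ x, m10 x = cexp μ Y {ω | Z ω = 1 ∧ S ω = 0 ∧ X ω = x})
    (hrbar0 : rbar0 = Pr μ {ω | S ω = 1 ∧ Z ω = 0} / Pr μ {ω | Z ω = 0})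
    (hposX : ∀ x, 0 < Pr μ {ω | X ω = x} →
      0 < Pr μ {ω | Z ω = 0 ∧ X ω = x} ∧ 0 < Pr μ {ω | Z ω = 1 ∧ X ω = x} ∧
      0 < ρF0 x ∧ 0 < ρF1 x ∧ ρF1 x < 1)
    (hrpos : 0 < rbar0) :
    cexp μ Y1 {ω | S0 ω = 1}
      = ∑' x : ℕ, (ρF0 x / rbar0)
          * (m11 x * (ρF1 x / ρF0 x) + m10 x * (1 - ρF1 x / ρF0 x))
          * Pr μ {ω | X ω = x} := by
  have hind0 : IndepFun Z S0 μ := hindep.comp measurable_id (by fun_prop : Measurable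
    fun w : ℕ × ℝ × ℝ × ℝ × ℝ => w.2.1)
  have hindX0 : IndepFun Z (fun ω => (X ω, S0 ω)) μ := hindep.comp measurable_id (by fun_prop :
    Measurable fun w : ℕ × ℝ × ℝ × ℝ × ℝ => (w.1, w.2.1))
  have hindX1 : IndepFun Z (fun ω => (X ω, S1 ω)) μ := hindep.comp measurable_id (by fun_prop :
    Measurable fun w : ℕ × ℝ × ℝ × ℝ × ℝ => (w.1, w.2.2.1))
  have hindX1Y : IndepFun Z (fun ω => (X ω, S1 ω, Y1 ω)) μ := hindep.comp measurable_id
    (by fun_prop : Measurable fun w : ℕ × ℝ × ℝ × ℝ × ℝ => (w.1, w.2.2.1, w.2.2.2.2))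
  have hcons0 : ∀ ω, Z ω = 0 → S ω = S0 ω := fun ω h => by simp [hconsS, h]
  have hcons1 : ∀ ω, Z ω = 1 → S ω = S1 ω := fun ω h => by simp [hconsS, h]
  have hconsY1 : ∀ ω, Z ω = 1 → Y ω = Y1 ω := fun ω h => by simp [hconsY, h]
  have hrbar : rbar0 = Pr μ {ω | S0 ω = 1} := by
    refine hrbar0.trans (Pr_arm_div_eq_of_indepFun hind0 hcons0 fun h => ?_)
    rw [hrbar0, h, div_zero] at hrpos
    exact lt_irrefl 0 hrpos
  have hterm : ∀ x, (ρF0 x / rbar0) * (m11 x * (ρF1 x / ρF0 x) + m10 x * (1 - ρF1 x / ρF0 x))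
      * Pr μ {ω | X ω = x} = (∫ ω in {ω | X ω = x} ∩ {ω | S0 ω = 1}, Y1 ω ∂μ) / rbar0 := by
    intro x
    rcases (show 0 ≤ Pr μ {ω | X ω = x} from measureReal_nonneg).eq_or_lt with hx | hx
    · have hnull : μ {ω | X ω = x} = 0 :=
        (measureReal_eq_zero_iff (measure_ne_top _ _)).1 hx.symm
      rw [← hx, mul_zero,
        Measure.restrict_eq_zero.2 (measure_mono_null Set.inter_subset_left hnull),
        integral_zero_measure, zero_div]
    obtain ⟨h0, h1, hρ0, -, -⟩ := hposX x hx
    have hp0 : Pr μ ({ω | X ω = x} ∩ {ω | S0 ω = 1}) = ρF0 x * Pr μ {ω | X ω = x} := by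
      rw [hρF0 x, Pr_arm_inter_div_eq_of_indepFun hindX0 hcons0 h0.ne', div_mul_cancel₀ _ hx.ne']
    have hp1 : Pr μ ({ω | X ω = x} ∩ {ω | S1 ω = 1}) = ρF1 x * Pr μ {ω | X ω = x} := by
      rw [hρF1 x, Pr_arm_inter_div_eq_of_indepFun hindX1 hcons1 h1.ne', div_mul_cancel₀ _ hx.ne']
    rw [setIntegral_eq_principal_strata (E := {ω | X ω = x}) (hXm (measurableSet_singleton x))
      hS1m hY1m hS0 hS1 hmono hint (fun B hB => hPPI x B hB 1), hp0, hp1, hm11 x, hm10 x,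
      cexp_arm_eq_of_indepFun hindX1Y hZm hXm hS1m hY1m hcons1 hconsY1 h1.ne',
      cexp_arm_eq_of_indepFun hindX1Y hZm hXm hS1m hY1m hcons1 hconsY1 h1.ne']
    field_simp
  calc cexp μ Y1 {ω | S0 ω = 1} = (∫ ω in {ω | S0 ω = 1}, Y1 ω ∂μ) / rbar0 := by
        rw [cexp, hrbar]
    _ = ∑' x, (∫ ω in {ω | X ω = x} ∩ {ω | S0 ω = 1}, Y1 ω ∂μ) / rbar0 :=
      ((hasSum_setIntegral_fiber_inter hXm (hS0m (measurableSet_singleton 1))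
        hint.integrableOn).div_const _).tsum_eq.symm
    _ = _ := tsum_congr fun x => (hterm x).symm

/-- Identification of `E[Y(1) | S(0)=1]` under partial principal ignorability:
the ψ₁PI functional. -/
theorem id_EY1_naturally_infected_PPI
    {Ω : Type*} [MeasurableSpace Ω] (μ : Measure Ω) [IsProbabilityMeasure μ]
    (X : Ω → ℕ) (Z S0 S1 Y0 Y1 S Y : Ω → ℝ)
    (ρF0 ρF1 m11 m10 : ℕ → ℝ) (rbar0 : ℝ)
    (hXm : Measurable X) (hZm : Measurable Z)
    (hS0m : Measurable S0) (hS1m : Measurable S1)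
    (hY0m : Measurable Y0) (hY1m : Measurable Y1)
    (hZ : ∀ ω, Z ω = 0 ∨ Z ω = 1)
    (hS0 : ∀ ω, S0 ω = 0 ∨ S0 ω = 1) (hS1 : ∀ ω, S1 ω = 0 ∨ S1 ω = 1)
    (hindep : IndepFun Z (fun ω => (X ω, S0 ω, S1 ω, Y0 ω, Y1 ω)) μ)
    (hconsS : ∀ ω, S ω = if Z ω = 1 then S1 ω else S0 ω)
    (hconsY : ∀ ω, Y ω = if Z ω = 1 then Y1 ω else Y0 ω)
    (hmono : ∀ᵐ ω ∂μ, S1 ω ≤ S0 ω)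
    (hint : Integrable Y1 μ)
    (hPPI : ∀ (x : ℕ) (B : Set ℝ), MeasurableSet B → ∀ s₀ : ℝ,
      μ ({ω | Y1 ω ∈ B ∧ S0 ω = s₀} ∩ {ω | X ω = x ∧ S1 ω = 0})
          * μ {ω | X ω = x ∧ S1 ω = 0}
        = μ ({ω | Y1 ω ∈ B} ∩ {ω | X ω = x ∧ S1 ω = 0})
          * μ ({ω | S0 ω = s₀} ∩ {ω | X ω = x ∧ S1 ω = 0}))
    (hρF0 : ∀ x, ρF0 x
      = Pr μ {ω | S ω = 1 ∧ Z ω = 0 ∧ X ω = x} / Pr μ {ω | Z ω = 0 ∧ X ω = x})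
    (hρF1 : ∀ x, ρF1 x
      = Pr μ {ω | S ω = 1 ∧ Z ω = 1 ∧ X ω = x} / Pr μ {ω | Z ω = 1 ∧ X ω = x})
    (hm11 : ∀ x, m11 x = cexp μ Y {ω | Z ω = 1 ∧ S ω = 1 ∧ X ω = x})
    (hm10 : ∀ x, m10 x = cexp μ Y {ω | Z ω = 1 ∧ S ω = 0 ∧ X ω = x})
    (hrbar0 : rbar0 = Pr μ {ω | S ω = 1 ∧ Z ω = 0} / Pr μ {ω | Z ω = 0})
    (hposX : ∀ x, 0 < Pr μ {ω | X ω = x} →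
      0 < Pr μ {ω | Z ω = 0 ∧ X ω = x} ∧ 0 < Pr μ {ω | Z ω = 1 ∧ X ω = x} ∧
      0 < ρF0 x ∧ 0 < ρF1 x ∧ ρF1 x < 1)
    (hrpos : 0 < rbar0) :
    cexp μ Y1 {ω | S0 ω = 1}
      = ∑' x : ℕ, (ρF0 x / rbar0)
          * (m11 x * (ρF1 x / ρF0 x) + m10 x * (1 - ρF1 x / ρF0 x))
          * Pr μ {ω | X ω = x} :=
  id_EY1_naturally_infected_PPI_general μ X Z S0 S1 Y0 Y1 S Y ρF0 ρF1 m11 m10 rbar0 hXm hZm hS0m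
    hS1m hY1m hS0 hS1 hindep hconsS hconsY hmono hint hPPI hρF0 hρF1 hm11 hm10 hrbar0 hposX hrpos
end

section
/- If an infection-necessary outcome satisfies Y = 0 whenever S = 0 (almost surely), then under randomization, consistency, and monotonicity, E[Y(1) | S(0)=1] = E[Y | Z=1, S=1] · ρ̄_1 / ρ̄_0, where ρ̄_z = P(S=1 | Z=z). -/
/-! Randomization makes `Z` independent of the potential outcomes, so conditioning on `Z = z`
turns `ρ̄_z` into `P(S(z) = 1)` and the numerator `E[Y; Z = 1, S = 1]` into
`P(Z = 1) · E[Y(1); S(1) = 1]`. Monotonicity gives `S(1) = 1 → S(0) = 1`, and the units with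
`S(0) = 1`, `S(1) = 0` have `Y(1) = 0`, so `E[Y(1); S(1) = 1] = E[Y(1); S(0) = 1]`. -/

open MeasureTheory ProbabilityTheory

namespace ProbabilityTheory

variable {Ω α β : Type*} [MeasurableSpace Ω] [MeasurableSpace α] [MeasurableSpace β]
  {μ : Measure Ω} {Z : Ω → α} {X : Ω → β} {A : Set α} {B : Set β}

lemma IndepFun.measureReal_preimage_inter (h : IndepFun Z X μ) (hA : MeasurableSet A)
    (hB : MeasurableSet B) :
    μ.real (Z ⁻¹' A ∩ X ⁻¹' B) = μ.real (Z ⁻¹' A) * μ.real (X ⁻¹' B) := by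
  simp only [measureReal_def, h.measure_inter_preimage_eq_mul A B hA hB, ENNReal.toReal_mul]

lemma IndepFun.measureReal_preimage_inter_div (h : IndepFun Z X μ) (hA : MeasurableSet A)
    (hB : MeasurableSet B) (hZA : μ.real (Z ⁻¹' A) ≠ 0) :
    μ.real (Z ⁻¹' A ∩ X ⁻¹' B) / μ.real (Z ⁻¹' A) = μ.real (X ⁻¹' B) := by
  rw [h.measureReal_preimage_inter hA hB, mul_div_cancel_left₀ _ hZA]

lemma IndepFun.setIntegral_preimage_eq_mul [IsProbabilityMeasure μ] {X : Ω → ℝ}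
    (h : IndepFun Z X μ) (hZ : Measurable Z) (hX : AEMeasurable X μ) (hA : MeasurableSet A) :
    ∫ ω in Z ⁻¹' A, X ω ∂μ = μ.real (Z ⁻¹' A) * ∫ ω, X ω ∂μ :=
  ((IndepFun_iff_Indep _ _ _).mp h).setIntegral_eq_mul (f := id) hZ.comap_le hX ⟨A, hA, rfl⟩
    aestronglyMeasurable_id

end ProbabilityTheory

section PotentialOutcomes

variable {Ω : Type*} {Z S0 S1 S : Ω → ℝ}

lemma setOf_treated_eq (hcons : ∀ ω, S ω = if Z ω = 1 then S1 ω else S0 ω) :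
    {ω | Z ω = 1 ∧ S ω = 1} = Z ⁻¹' {1} ∩ S1 ⁻¹' {1} := by
  ext ω
  by_cases hZ : Z ω = 1 <;> simp [hcons ω, hZ]

lemma setOf_control_eq (hcons : ∀ ω, S ω = if Z ω = 1 then S1 ω else S0 ω) :
    {ω | S ω = 1 ∧ Z ω = 0} = Z ⁻¹' {0} ∩ S0 ⁻¹' {1} := by
  ext ω
  by_cases hZ : Z ω = 0 <;> simp [hcons ω, hZ, and_comm]

lemma setIntegral_treated_eq [MeasurableSpace Ω] {μ : Measure Ω} {Y0 Y1 Y : Ω → ℝ}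
    (hZm : Measurable Z) (hS1m : Measurable S1)
    (hconsS : ∀ ω, S ω = if Z ω = 1 then S1 ω else S0 ω)
    (hconsY : ∀ ω, Y ω = if Z ω = 1 then Y1 ω else Y0 ω) :
    ∫ ω in {ω | Z ω = 1 ∧ S ω = 1}, Y ω ∂μ
      = ∫ ω in Z ⁻¹' {1}, (S1 ⁻¹' {1}).indicator Y1 ω ∂μ := by
  have hS1 : MeasurableSet (S1 ⁻¹' {1}) := hS1m (measurableSet_singleton 1)
  rw [setOf_treated_eq hconsS, setIntegral_indicator hS1]
  exact setIntegral_congr_fun ((hZm (measurableSet_singleton 1)).inter hS1)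
    fun ω hω => by rw [hconsY ω, if_pos (show Z ω = 1 from hω.1)]

lemma indicator_ae_eq_of_monotone_of_necessary [MeasurableSpace Ω] {μ : Measure Ω} {Y1 : Ω → ℝ}
    (hS0 : ∀ ω, S0 ω = 0 ∨ S0 ω = 1) (hS1 : ∀ ω, S1 ω = 0 ∨ S1 ω = 1)
    (hmono : ∀ᵐ ω ∂μ, S1 ω ≤ S0 ω) (hnec : ∀ᵐ ω ∂μ, S1 ω = 0 → Y1 ω = 0) :
    (S1 ⁻¹' {1}).indicator Y1 =ᵐ[μ] (S0 ⁻¹' {1}).indicator Y1 := by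
  filter_upwards [hmono, hnec] with ω hle hY
  rcases hS1 ω with h1 | h1
  · by_cases h0 : S0 ω = 1 <;> simp [Set.indicator, h1, h0, hY h1]
  · have h0 : S0 ω = 1 := by rcases hS0 ω with h0 | h0 <;> [linarith; exact h0]
    simp [Set.indicator, h1, h0]

end PotentialOutcomes

theorem id_EY1_infection_necessary_general
    {Ω : Type*} [MeasurableSpace Ω] (μ : Measure Ω) [IsProbabilityMeasure μ]
    (Z S0 S1 Y0 Y1 S Y : Ω → ℝ) (ρ0 ρ1 : ℝ)
    (hZm : Measurable Z) (hS0m : Measurable S0) (hS1m : Measurable S1)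
    (hS0 : ∀ ω, S0 ω = 0 ∨ S0 ω = 1) (hS1 : ∀ ω, S1 ω = 0 ∨ S1 ω = 1)
    (hindep : IndepFun Z (fun ω => (S0 ω, S1 ω, Y0 ω, Y1 ω)) μ)
    (hconsS : ∀ ω, S ω = if Z ω = 1 then S1 ω else S0 ω)
    (hconsY : ∀ ω, Y ω = if Z ω = 1 then Y1 ω else Y0 ω)
    (hmono : ∀ᵐ ω ∂μ, S1 ω ≤ S0 ω)
    (hnec : ∀ᵐ ω ∂μ, S1 ω = 0 → Y1 ω = 0)
    (hint : Integrable Y1 μ)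
    (hρ0 : ρ0 = Pr μ {ω | S ω = 1 ∧ Z ω = 0} / Pr μ {ω | Z ω = 0})
    (hρ1 : ρ1 = Pr μ {ω | S ω = 1 ∧ Z ω = 1} / Pr μ {ω | Z ω = 1})
    (hpos0 : 0 < Pr μ {ω | Z ω = 0})
    (hpos11 : 0 < Pr μ {ω | Z ω = 1 ∧ S ω = 1}) :
    cexp μ Y1 {ω | S0 ω = 1}
      = cexp μ Y {ω | Z ω = 1 ∧ S ω = 1} * ρ1 / ρ0 := by
  have hZS0 : IndepFun Z S0 μ := hindep.comp measurable_id measurable_fst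
  have hZS1 : IndepFun Z S1 μ := hindep.comp measurable_id (measurable_fst.comp measurable_snd)
  have hZW : IndepFun Z ((S1 ⁻¹' {1}).indicator Y1) μ :=
    hindep.comp measurable_id ((measurable_snd.comp (measurable_snd.comp measurable_snd)).indicator
      ((measurable_fst.comp measurable_snd) (measurableSet_singleton 1)))
  have hPr11 : Pr μ {ω | Z ω = 1 ∧ S ω = 1} = μ.real (Z ⁻¹' {1}) * μ.real (S1 ⁻¹' {1}) := by
    rw [setOf_treated_eq hconsS]
    exact hZS1.measureReal_preimage_inter (measurableSet_singleton 1) (measurableSet_singleton 1)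
  have hne : μ.real (Z ⁻¹' {1}) * μ.real (S1 ⁻¹' {1}) ≠ 0 := (hPr11 ▸ hpos11).ne'
  have hρ1 : ρ1 = μ.real (S1 ⁻¹' {1}) := by
    rw [hρ1, Set.ext fun ω => and_comm, setOf_treated_eq hconsS]
    exact hZS1.measureReal_preimage_inter_div (measurableSet_singleton 1)
      (measurableSet_singleton 1) (left_ne_zero_of_mul hne)
  have hρ0 : ρ0 = μ.real (S0 ⁻¹' {1}) := by
    rw [hρ0, setOf_control_eq hconsS]
    exact hZS0.measureReal_preimage_inter_div (measurableSet_singleton 0)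
      (measurableSet_singleton 1) hpos0.ne'
  have hnum : ∫ ω in {ω | Z ω = 1 ∧ S ω = 1}, Y ω ∂μ
      = μ.real (Z ⁻¹' {1}) * ∫ ω in {ω | S0 ω = 1}, Y1 ω ∂μ := by
    rw [setIntegral_treated_eq hZm hS1m hconsS hconsY,
      hZW.setIntegral_preimage_eq_mul hZm
        (hint.indicator (hS1m (measurableSet_singleton 1))).aemeasurable
        (measurableSet_singleton 1),
      integral_congr_ae (indicator_ae_eq_of_monotone_of_necessary hS0 hS1 hmono hnec),
      integral_indicator (hS0m (measurableSet_singleton 1))]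
    rfl
  rw [cexp, cexp, hnum, hPr11, hρ1, hρ0, mul_div_mul_left _ _ (left_ne_zero_of_mul hne),
    div_mul_cancel₀ _ (right_ne_zero_of_mul hne)]
  rfl

/-- For an infection-necessary outcome (`Y(1)=0` a.s. when `S(1)=0`), the Naturally Infected
mean under vaccine is point identified: `E[Y(1)|S(0)=1] = E[Y|Z=1,S=1]·ρ̄₁/ρ̄₀`. -/
theorem id_EY1_infection_necessary
    {Ω : Type*} [MeasurableSpace Ω] (μ : Measure Ω) [IsProbabilityMeasure μ]
    (Z S0 S1 Y0 Y1 S Y : Ω → ℝ) (ρ0 ρ1 : ℝ)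
    (hZm : Measurable Z) (hS0m : Measurable S0) (hS1m : Measurable S1)
    (hY0m : Measurable Y0) (hY1m : Measurable Y1)
    (hZ : ∀ ω, Z ω = 0 ∨ Z ω = 1)
    (hS0 : ∀ ω, S0 ω = 0 ∨ S0 ω = 1) (hS1 : ∀ ω, S1 ω = 0 ∨ S1 ω = 1)
    (hindep : IndepFun Z (fun ω => (S0 ω, S1 ω, Y0 ω, Y1 ω)) μ)
    (hconsS : ∀ ω, S ω = if Z ω = 1 then S1 ω else S0 ω)
    (hconsY : ∀ ω, Y ω = if Z ω = 1 then Y1 ω else Y0 ω)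
    (hmono : ∀ᵐ ω ∂μ, S1 ω ≤ S0 ω)
    (hnec : ∀ᵐ ω ∂μ, S1 ω = 0 → Y1 ω = 0)
    (hint : Integrable Y1 μ)
    (hρ0 : ρ0 = Pr μ {ω | S ω = 1 ∧ Z ω = 0} / Pr μ {ω | Z ω = 0})
    (hρ1 : ρ1 = Pr μ {ω | S ω = 1 ∧ Z ω = 1} / Pr μ {ω | Z ω = 1})
    (hpos0 : 0 < Pr μ {ω | Z ω = 0}) (hpos1 : 0 < Pr μ {ω | Z ω = 1})
    (hρ0pos : 0 < ρ0)
    (hpos11 : 0 < Pr μ {ω | Z ω = 1 ∧ S ω = 1}) :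
    cexp μ Y1 {ω | S0 ω = 1}
      = cexp μ Y {ω | Z ω = 1 ∧ S ω = 1} * ρ1 / ρ0 :=
  id_EY1_infection_necessary_general μ Z S0 S1 Y0 Y1 S Y ρ0 ρ1 hZm hS0m hS1m hS0 hS1 hindep hconsS
    hconsY hmono hnec hint hρ0 hρ1 hpos0 hpos11
end

section
/- Under randomization, consistency, monotonicity, and the sensitivity assumption E[Y(1) | S(1)=0, S(0)=0, X=x] = ε · E[Y(1) | S(1)=0, S(0)=1, X=x] for a constant ε > 0, the Protected-stratum conditional mean is identified: E[Y(1) | S(1)=0, S(0)=1, X=x] = μ_10(x) · (1 − ρ_1(x)) / [ε(1 − ρ_0(x)) + ρ_0(x) − ρ_1(x)], where μ_10(x) = E[Y | Z=1, S=0, X=x] and ρ_z(x) = P(S=1 | Z=z, X=x). -/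
open MeasureTheory ProbabilityTheory

/-!
Since `Z` is independent of `(X, S(0), S(1), Y(1))`, conditioning on `Z = z` leaves their joint
law unchanged; with consistency this gives `ρ_z(x) = P(S(z) = 1 | X = x)` and
`μ_10(x) = E[Y(1) | S(1) = 0, X = x]`. Monotonicity makes the defier stratum null, so writing
`a, b, c` for the masses of the strata `(S(1), S(0)) = (0,0), (0,1), (1,1)` within `X = x`,
`1 - ρ_1 = (a + b)/(a + b + c)` and `ε(1 - ρ_0) + ρ_0 - ρ_1 = (εa + b)/(a + b + c)`, while
`μ_10` is the `(a, b)`-weighted mean of the two stratum means, the first being `ε` times the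
second. Solving gives the protected-stratum mean `μ_10 (a + b)/(εa + b)`.
-/

lemma Pr_eq_measureReal {Ω : Type*} [MeasurableSpace Ω] (μ : Measure Ω) (A : Set Ω) :
    Pr μ A = μ.real A := rfl

section Independence

variable {Ω α β : Type*} {mΩ : MeasurableSpace Ω} [mα : MeasurableSpace α] [mβ : MeasurableSpace β]
  {μ : Measure Ω} {Z : Ω → α} {V : Ω → β} {G E F : Set Ω}

namespace ProbabilityTheory.IndepFun

lemma measureReal_inter (h : IndepFun Z V μ) (hG : MeasurableSet[mα.comap Z] G)
    (hE : MeasurableSet[mβ.comap V] E) : μ.real (G ∩ E) = μ.real G * μ.real E := by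
  simp only [Measure.real, h.meas_inter hG hE, ENNReal.toReal_mul]

lemma measureReal_inter_div_measureReal_inter (h : IndepFun Z V μ)
    (hG : MeasurableSet[mα.comap Z] G) (hG0 : μ.real G ≠ 0)
    (hE : MeasurableSet[mβ.comap V] E) (hF : MeasurableSet[mβ.comap V] F) :
    μ.real (G ∩ E) / μ.real (G ∩ F) = μ.real E / μ.real F := by
  rw [h.measureReal_inter hG hE, h.measureReal_inter hG hF, mul_div_mul_left _ _ hG0]

lemma setIntegral_inter {Y : Ω → ℝ} (h : IndepFun Z (fun ω => (V ω, Y ω)) μ)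
    (hZ : Measurable Z) (hV : Measurable V) (hY : AEMeasurable Y μ)
    (hG : MeasurableSet[mα.comap Z] G) (hE : MeasurableSet[mβ.comap V] E) :
    ∫ ω in G ∩ E, Y ω ∂μ = μ.real G * ∫ ω in E, Y ω ∂μ := by
  obtain ⟨T, hT, rfl⟩ := hE
  have hf : Measurable fun p : β × ℝ => T.indicator 1 p.1 * p.2 :=
    ((measurable_one.indicator hT).comp measurable_fst).mul measurable_snd
  have hind : ∀ ω, T.indicator 1 (V ω) * Y ω = (V ⁻¹' T).indicator Y ω := fun ω => by
    by_cases hω : V ω ∈ T <;> simp [hω]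
  have hfactor := ((IndepFun_iff_Indep _ _ _).1 h).setIntegral_eq_mul hZ.comap_le
    (hV.aemeasurable.prodMk hY) hG hf.aestronglyMeasurable
  simp only [hind] at hfactor
  rwa [setIntegral_indicator (hV hT), integral_indicator (hV hT)] at hfactor

lemma cexp_inter {Y : Ω → ℝ} (h : IndepFun Z (fun ω => (V ω, Y ω)) μ)
    (hZ : Measurable Z) (hV : Measurable V) (hY : AEMeasurable Y μ)
    (hG : MeasurableSet[mα.comap Z] G) (hG0 : μ.real G ≠ 0) (hE : MeasurableSet[mβ.comap V] E) :
    cexp μ Y (G ∩ E) = cexp μ Y E := by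
  have hVindep : IndepFun Z V μ := h.comp measurable_id measurable_fst
  rw [cexp, cexp, Pr_eq_measureReal, Pr_eq_measureReal, h.setIntegral_inter hZ hV hY hG hE,
    hVindep.measureReal_inter hG hE, mul_div_mul_left _ _ hG0]

end ProbabilityTheory.IndepFun

end Independence

lemma inter_setOf_eq_one_eq_sdiff {Ω : Type*} {T : Ω → ℝ} (hT : ∀ ω, T ω = 0 ∨ T ω = 1)
    (E : Set Ω) : E ∩ {ω | T ω = 1} = E \ {ω | T ω = 0} := by
  ext ω
  rcases hT ω with h | h <;> simp [h]

section BinarySplit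

variable {Ω : Type*} [MeasurableSpace Ω] {μ : Measure Ω} {T : Ω → ℝ}

lemma measureReal_eq_add_of_binary [IsFiniteMeasure μ] (hT : ∀ ω, T ω = 0 ∨ T ω = 1)
    (hTm : Measurable T) (E : Set Ω) :
    μ.real E = μ.real (E ∩ {ω | T ω = 0}) + μ.real (E ∩ {ω | T ω = 1}) := by
  rw [inter_setOf_eq_one_eq_sdiff hT,
    measureReal_inter_add_sdiff (t := {ω | T ω = 0}) (hTm (measurableSet_singleton 0))]

lemma setIntegral_eq_add_of_binary {Y : Ω → ℝ} (hT : ∀ ω, T ω = 0 ∨ T ω = 1)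
    (hTm : Measurable T) {E : Set Ω} (hY : IntegrableOn Y E μ) :
    ∫ ω in E, Y ω ∂μ = ∫ ω in E ∩ {ω | T ω = 0}, Y ω ∂μ + ∫ ω in E ∩ {ω | T ω = 1}, Y ω ∂μ := by
  rw [inter_setOf_eq_one_eq_sdiff hT,
    integral_inter_add_sdiff (t := {ω | T ω = 0}) (hTm (measurableSet_singleton 0)) hY]

end BinarySplit

section PrincipalStrata

variable {Ω : Type*} [MeasurableSpace Ω] {μ : Measure Ω} {X : Ω → ℕ} {S0 S1 : Ω → ℝ} (x : ℕ)

lemma Pr_X_eq_split_S1 [IsFiniteMeasure μ] (hS1 : ∀ ω, S1 ω = 0 ∨ S1 ω = 1)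
    (hS1m : Measurable S1) :
    Pr μ {ω | X ω = x} = Pr μ {ω | S1 ω = 0 ∧ X ω = x} + Pr μ {ω | S1 ω = 1 ∧ X ω = x} := by
  simp only [Pr_eq_measureReal]
  rw [measureReal_eq_add_of_binary hS1 hS1m]
  congr 2 <;> ext ω <;> simp only [Set.mem_inter_iff, Set.mem_ofPred_eq] <;> tauto

lemma Pr_S1_zero_split_S0 [IsFiniteMeasure μ] (hS0 : ∀ ω, S0 ω = 0 ∨ S0 ω = 1)
    (hS0m : Measurable S0) :
    Pr μ {ω | S1 ω = 0 ∧ X ω = x}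
      = Pr μ {ω | S1 ω = 0 ∧ S0 ω = 0 ∧ X ω = x} + Pr μ {ω | S1 ω = 0 ∧ S0 ω = 1 ∧ X ω = x} := by
  simp only [Pr_eq_measureReal]
  rw [measureReal_eq_add_of_binary hS0 hS0m]
  congr 2 <;> ext ω <;> simp only [Set.mem_inter_iff, Set.mem_ofPred_eq] <;> tauto

lemma Pr_S0_one_split_S1 [IsFiniteMeasure μ] (hS1 : ∀ ω, S1 ω = 0 ∨ S1 ω = 1)
    (hS1m : Measurable S1) :
    Pr μ {ω | S0 ω = 1 ∧ X ω = x}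
      = Pr μ {ω | S1 ω = 0 ∧ S0 ω = 1 ∧ X ω = x} + Pr μ {ω | S1 ω = 1 ∧ S0 ω = 1 ∧ X ω = x} := by
  simp only [Pr_eq_measureReal]
  rw [measureReal_eq_add_of_binary hS1 hS1m]
  congr 2 <;> ext ω <;> simp only [Set.mem_inter_iff, Set.mem_ofPred_eq] <;> tauto

lemma Pr_S1_one_eq_of_monotone (hS0 : ∀ ω, S0 ω = 0 ∨ S0 ω = 1)
    (hmono : ∀ᵐ ω ∂μ, S1 ω ≤ S0 ω) :
    Pr μ {ω | S1 ω = 1 ∧ X ω = x} = Pr μ {ω | S1 ω = 1 ∧ S0 ω = 1 ∧ X ω = x} := by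
  refine measureReal_congr (Filter.eventuallyEq_set.2 (hmono.mono fun ω hω => ?_))
  rcases hS0 ω with h | h
  · simp only [Set.mem_ofPred_eq, h, zero_ne_one, false_and, and_false, iff_false, not_and]
    intro h1
    linarith
  · simp only [Set.mem_ofPred_eq, h, true_and]

lemma setIntegral_S1_zero_split_S0 {Y : Ω → ℝ} (hS0 : ∀ ω, S0 ω = 0 ∨ S0 ω = 1)
    (hS0m : Measurable S0) (hY : Integrable Y μ) :
    ∫ ω in {ω | S1 ω = 0 ∧ X ω = x}, Y ω ∂μ
      = ∫ ω in {ω | S1 ω = 0 ∧ S0 ω = 0 ∧ X ω = x}, Y ω ∂μ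
        + ∫ ω in {ω | S1 ω = 0 ∧ S0 ω = 1 ∧ X ω = x}, Y ω ∂μ := by
  rw [setIntegral_eq_add_of_binary hS0 hS0m hY.integrableOn]
  congr 3 <;> ext ω <;> simp only [Set.mem_inter_iff, Set.mem_ofPred_eq] <;> tauto

end PrincipalStrata

section Consistency

variable {Ω : Type*} [MeasurableSpace Ω] {μ : Measure Ω} [IsFiniteMeasure μ]
  {X : Ω → ℕ} {Z S Sz : Ω → ℝ} {z : ℝ} (x : ℕ)

lemma measureReal_preimage_ne_zero_of_pos (hpos : 0 < Pr μ {ω | Z ω = z ∧ X ω = x}) :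
    μ.real (Z ⁻¹' {z}) ≠ 0 :=
  (hpos.trans_le (measureReal_mono fun _ h => h.1)).ne'

lemma selectionRate_eq_of_indepFun (hindep : IndepFun Z (fun ω => (X ω, Sz ω)) μ)
    (hcons : ∀ ω, Z ω = z → S ω = Sz ω) (hpos : 0 < Pr μ {ω | Z ω = z ∧ X ω = x}) :
    Pr μ {ω | S ω = 1 ∧ Z ω = z ∧ X ω = x} / Pr μ {ω | Z ω = z ∧ X ω = x}
      = Pr μ {ω | Sz ω = 1 ∧ X ω = x} / Pr μ {ω | X ω = x} := by
  have hset : {ω | S ω = 1 ∧ Z ω = z ∧ X ω = x} = Z ⁻¹' {z} ∩ {ω | Sz ω = 1 ∧ X ω = x} := by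
    ext ω
    simp only [Set.mem_inter_iff, Set.mem_preimage, Set.mem_singleton_iff, Set.mem_ofPred_eq]
    constructor
    · rintro ⟨hS, hZ, hX⟩; exact ⟨hZ, hcons ω hZ ▸ hS, hX⟩
    · rintro ⟨hZ, hS, hX⟩; exact ⟨hcons ω hZ ▸ hS, hZ, hX⟩
  rw [hset]
  exact hindep.measureReal_inter_div_measureReal_inter ⟨{z}, measurableSet_singleton z, rfl⟩
    (measureReal_preimage_ne_zero_of_pos x hpos)
    ⟨{v | v.2 = 1 ∧ v.1 = x}, (measurable_snd (measurableSet_singleton 1)).inter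
      (measurable_fst (measurableSet_singleton x)), rfl⟩
    ⟨{v | v.1 = x}, measurable_fst (measurableSet_singleton x), rfl⟩

lemma cexp_eq_of_indepFun {s : ℝ} {Yz Y : Ω → ℝ}
    (hindep : IndepFun Z (fun ω => ((X ω, Sz ω), Yz ω)) μ) (hZm : Measurable Z)
    (hXm : Measurable X) (hSzm : Measurable Sz) (hYz : AEMeasurable Yz μ)
    (hconsS : ∀ ω, Z ω = z → S ω = Sz ω) (hconsY : ∀ ω, Z ω = z → Y ω = Yz ω)
    (hpos : 0 < Pr μ {ω | Z ω = z ∧ X ω = x}) :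
    cexp μ Y {ω | Z ω = z ∧ S ω = s ∧ X ω = x} = cexp μ Yz {ω | Sz ω = s ∧ X ω = x} := by
  have hset : {ω | Z ω = z ∧ S ω = s ∧ X ω = x} = Z ⁻¹' {z} ∩ {ω | Sz ω = s ∧ X ω = x} := by
    ext ω
    simp only [Set.mem_inter_iff, Set.mem_preimage, Set.mem_singleton_iff, Set.mem_ofPred_eq]
    constructor
    · rintro ⟨hZ, hS, hX⟩; exact ⟨hZ, hconsS ω hZ ▸ hS, hX⟩
    · rintro ⟨hZ, hS, hX⟩; exact ⟨hZ, hconsS ω hZ ▸ hS, hX⟩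
  have hmeas : MeasurableSet {ω | Z ω = z ∧ S ω = s ∧ X ω = x} := by
    rw [hset]
    exact (hZm (measurableSet_singleton z)).inter
      ((hSzm (measurableSet_singleton s)).inter (hXm (measurableSet_singleton x)))
  have hY : cexp μ Y {ω | Z ω = z ∧ S ω = s ∧ X ω = x}
      = cexp μ Yz {ω | Z ω = z ∧ S ω = s ∧ X ω = x} := by
    rw [cexp, cexp, setIntegral_congr_fun hmeas fun ω hω => hconsY ω hω.1]
  rw [hY, hset]
  exact hindep.cexp_inter hZm (hXm.prodMk hSzm) hYz ⟨{z}, measurableSet_singleton z, rfl⟩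
    (measureReal_preimage_ne_zero_of_pos x hpos)
    ⟨{v | v.2 = s ∧ v.1 = x}, (measurable_snd (measurableSet_singleton s)).inter
      (measurable_fst (measurableSet_singleton x)), rfl⟩

end Consistency

lemma protectedMean_eq_of_sensitivity {a b c IA IB ε : ℝ} (ha : 0 < a) (hb : 0 < b)
    (hc : 0 ≤ c) (hε : 0 < ε) (hsens : IA / a = ε * (IB / b)) :
    IB / b = (IA + IB) / (a + b) * (1 - c / (a + b + c)) /
      (ε * (1 - (b + c) / (a + b + c)) + (b + c) / (a + b + c) - c / (a + b + c)) := by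
  have hs : 0 < a + b + c := by positivity
  have hεab : 0 < ε * a + b := by positivity
  have hIA : IA = ε * a * (IB / b) := by
    rw [div_eq_iff ha.ne'] at hsens; linarith
  have hnum : 1 - c / (a + b + c) = (a + b) / (a + b + c) := by
    field_simp; ring
  have hden : ε * (1 - (b + c) / (a + b + c)) + (b + c) / (a + b + c) - c / (a + b + c)
      = (ε * a + b) / (a + b + c) := by
    field_simp; ring
  rw [hnum, hden, hIA]
  field_simp

theorem id_protected_mean_sensitivity_general
    {Ω : Type*} [MeasurableSpace Ω] (μ : Measure Ω) [IsProbabilityMeasure μ]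
    (X : Ω → ℕ) (Z S0 S1 Y0 Y1 S Y : Ω → ℝ) (x : ℕ) (ε m10x ρ0x ρ1x : ℝ)
    (hXm : Measurable X) (hZm : Measurable Z)
    (hS0m : Measurable S0) (hS1m : Measurable S1)
    (hS0 : ∀ ω, S0 ω = 0 ∨ S0 ω = 1) (hS1 : ∀ ω, S1 ω = 0 ∨ S1 ω = 1)
    (hindep : IndepFun Z (fun ω => (X ω, S0 ω, S1 ω, Y0 ω, Y1 ω)) μ)
    (hconsS : ∀ ω, S ω = if Z ω = 1 then S1 ω else S0 ω)
    (hconsY : ∀ ω, Y ω = if Z ω = 1 then Y1 ω else Y0 ω)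
    (hmono : ∀ᵐ ω ∂μ, S1 ω ≤ S0 ω)
    (hint : Integrable Y1 μ)
    (hε : 0 < ε)
    (hsens : cexp μ Y1 {ω | S1 ω = 0 ∧ S0 ω = 0 ∧ X ω = x}
      = ε * cexp μ Y1 {ω | S1 ω = 0 ∧ S0 ω = 1 ∧ X ω = x})
    (hm10x : m10x = cexp μ Y {ω | Z ω = 1 ∧ S ω = 0 ∧ X ω = x})
    (hρ0x : ρ0x = Pr μ {ω | S ω = 1 ∧ Z ω = 0 ∧ X ω = x} / Pr μ {ω | Z ω = 0 ∧ X ω = x})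
    (hρ1x : ρ1x = Pr μ {ω | S ω = 1 ∧ Z ω = 1 ∧ X ω = x} / Pr μ {ω | Z ω = 1 ∧ X ω = x})
    (hposZ1 : 0 < Pr μ {ω | Z ω = 1 ∧ X ω = x})
    (hposZ0 : 0 < Pr μ {ω | Z ω = 0 ∧ X ω = x})
    (hposI : 0 < Pr μ {ω | S1 ω = 0 ∧ S0 ω = 0 ∧ X ω = x})
    (hposP : 0 < Pr μ {ω | S1 ω = 0 ∧ S0 ω = 1 ∧ X ω = x}) :
    cexp μ Y1 {ω | S1 ω = 0 ∧ S0 ω = 1 ∧ X ω = x}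
      = m10x * (1 - ρ1x) / (ε * (1 - ρ0x) + ρ0x - ρ1x) := by
  have hindep0 : IndepFun Z (fun ω => (X ω, S0 ω)) μ :=
    hindep.comp (ψ := fun v : ℕ × ℝ × ℝ × ℝ × ℝ => (v.1, v.2.1)) measurable_id (by fun_prop)
  have hindep1 : IndepFun Z (fun ω => ((X ω, S1 ω), Y1 ω)) μ :=
    hindep.comp (ψ := fun v : ℕ × ℝ × ℝ × ℝ × ℝ => ((v.1, v.2.2.1), v.2.2.2.2)) measurable_id
      (by fun_prop)
  have hcons0 : ∀ ω, Z ω = 0 → S ω = S0 ω := fun ω h => by simp [hconsS, h]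
  have hcons1 : ∀ ω, Z ω = 1 → S ω = S1 ω := fun ω h => by simp [hconsS, h]
  have hρ0 : ρ0x = Pr μ {ω | S0 ω = 1 ∧ X ω = x} / Pr μ {ω | X ω = x} :=
    hρ0x.trans (selectionRate_eq_of_indepFun x hindep0 hcons0 hposZ0)
  have hρ1 : ρ1x = Pr μ {ω | S1 ω = 1 ∧ X ω = x} / Pr μ {ω | X ω = x} :=
    hρ1x.trans (selectionRate_eq_of_indepFun x (hindep1.comp measurable_id measurable_fst)
      hcons1 hposZ1)
  have hm10 : m10x = cexp μ Y1 {ω | S1 ω = 0 ∧ X ω = x} :=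
    hm10x.trans (cexp_eq_of_indepFun x hindep1 hZm hXm hS1m hint.aemeasurable hcons1
      (fun ω h => by simp [hconsY, h]) hposZ1)
  rw [hm10, hρ0, hρ1, Pr_X_eq_split_S1 x hS1 hS1m, Pr_S1_one_eq_of_monotone x hS0 hmono,
    Pr_S0_one_split_S1 x hS1 hS1m, cexp, cexp, Pr_S1_zero_split_S0 x hS0 hS0m,
    setIntegral_S1_zero_split_S0 x hS0 hS0m hint]
  exact protectedMean_eq_of_sensitivity hposI hposP ENNReal.toReal_nonneg hε hsens

/-- Sensitivity-analysis identification of the Protected-stratum conditional mean under the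
assumption `E[Y(1)|S(1)=0,S(0)=0,X=x] = ε · E[Y(1)|S(1)=0,S(0)=1,X=x]`. -/
theorem id_protected_mean_sensitivity
    {Ω : Type*} [MeasurableSpace Ω] (μ : Measure Ω) [IsProbabilityMeasure μ]
    (X : Ω → ℕ) (Z S0 S1 Y0 Y1 S Y : Ω → ℝ) (x : ℕ) (ε m10x ρ0x ρ1x : ℝ)
    (hXm : Measurable X) (hZm : Measurable Z)
    (hS0m : Measurable S0) (hS1m : Measurable S1)
    (hY0m : Measurable Y0) (hY1m : Measurable Y1)
    (hZ : ∀ ω, Z ω = 0 ∨ Z ω = 1)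
    (hS0 : ∀ ω, S0 ω = 0 ∨ S0 ω = 1) (hS1 : ∀ ω, S1 ω = 0 ∨ S1 ω = 1)
    (hindep : IndepFun Z (fun ω => (X ω, S0 ω, S1 ω, Y0 ω, Y1 ω)) μ)
    (hconsS : ∀ ω, S ω = if Z ω = 1 then S1 ω else S0 ω)
    (hconsY : ∀ ω, Y ω = if Z ω = 1 then Y1 ω else Y0 ω)
    (hmono : ∀ᵐ ω ∂μ, S1 ω ≤ S0 ω)
    (hint : Integrable Y1 μ)
    (hε : 0 < ε)
    (hsens : cexp μ Y1 {ω | S1 ω = 0 ∧ S0 ω = 0 ∧ X ω = x}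
      = ε * cexp μ Y1 {ω | S1 ω = 0 ∧ S0 ω = 1 ∧ X ω = x})
    (hm10x : m10x = cexp μ Y {ω | Z ω = 1 ∧ S ω = 0 ∧ X ω = x})
    (hρ0x : ρ0x = Pr μ {ω | S ω = 1 ∧ Z ω = 0 ∧ X ω = x} / Pr μ {ω | Z ω = 0 ∧ X ω = x})
    (hρ1x : ρ1x = Pr μ {ω | S ω = 1 ∧ Z ω = 1 ∧ X ω = x} / Pr μ {ω | Z ω = 1 ∧ X ω = x})
    (hposZ1 : 0 < Pr μ {ω | Z ω = 1 ∧ X ω = x})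
    (hposZ0 : 0 < Pr μ {ω | Z ω = 0 ∧ X ω = x})
    (hρ1lt : ρ1x < 1) (hρlt : ρ1x < ρ0x)
    (hposI : 0 < Pr μ {ω | S1 ω = 0 ∧ S0 ω = 0 ∧ X ω = x})
    (hposP : 0 < Pr μ {ω | S1 ω = 0 ∧ S0 ω = 1 ∧ X ω = x})
    (hden : 0 < ε * (1 - ρ0x) + ρ0x - ρ1x) :
    cexp μ Y1 {ω | S1 ω = 0 ∧ S0 ω = 1 ∧ X ω = x}
      = m10x * (1 - ρ1x) / (ε * (1 - ρ0x) + ρ0x - ρ1x) :=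
  id_protected_mean_sensitivity_general μ X Z S0 S1 Y0 Y1 S Y x ε m10x ρ0x ρ1x hXm hZm hS0m hS1m hS0
    hS1 hindep hconsS hconsY hmono hint hε hsens hm10x hρ0x hρ1x hposZ1 hposZ0 hposI hposP
end

section
/- If both the exclusion restriction (Y(1) = Y(0) a.s. on {S(0)=0, S(1)=0}) and partial principal ignorability (Y(1) ⫫ S(0) | X, S(1)=0) hold, together with randomization, consistency, and monotonicity, then Y is conditionally mean-independent of Z given (S=0, X): E[Y | Z=1, S=0, X=x] = E[Y | Z=0, S=0, X=x] for all x with both conditioning events having positive probability. -/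
/-!
Randomization makes `Z` independent of the potential variables, so the left side is the mean of
`Y1` on `{X = x, S1 = 0}` and the right side the mean of `Y0` on `{X = x, S0 = 0}`. Monotonicity
makes the latter event a.s. equal to `{S0 = 0} ∩ {X = x, S1 = 0}`, where the exclusion restriction
lets us replace `Y0` by `Y1`. Partial principal ignorability says that the law of `Y1` on
`{X = x, S1 = 0}` does not change when one further conditions on `S0 = 0`, so the two means agree.
-/

open MeasureTheory ProbabilityTheory

lemma setOf_arm_eq {Ω α : Type*} {X : Ω → α} {Z S Sz : Ω → ℝ} {z s : ℝ} {x : α}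
    (hS : ∀ ω, Z ω = z → S ω = Sz ω) :
    {ω | Z ω = z ∧ S ω = s ∧ X ω = x} = Z ⁻¹' {z} ∩ {ω | X ω = x ∧ Sz ω = s} := by
  ext ω
  by_cases hz : Z ω = z <;> simp [hS ω, hz, and_comm]

section Cexp

variable {Ω : Type*} [MeasurableSpace Ω] {μ : Measure Ω}

lemma measure_ne_zero_of_Pr_pos {A : Set Ω} (h : 0 < Pr μ A) : μ A ≠ 0 :=
  fun h0 => by simp [Pr, h0] at h

lemma cexp_congr_ae {Y Y' : Ω → ℝ} {A : Set Ω} (hA : MeasurableSet A)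
    (h : ∀ᵐ ω ∂μ, ω ∈ A → Y ω = Y' ω) : cexp μ Y A = cexp μ Y' A := by
  rw [cexp, cexp, setIntegral_congr_ae hA h]

lemma cexp_congr_set {Y : Ω → ℝ} {A B : Set Ω} (h : A =ᵐ[μ] B) : cexp μ Y A = cexp μ Y B := by
  rw [cexp, cexp, Pr, Pr, setIntegral_congr_set h, measure_congr h]

lemma ProbabilityTheory.IndepFun.cexp_preimage_inter {β γ : Type*} [MeasurableSpace β]
    [MeasurableSpace γ] [IsFiniteMeasure μ] {Z : Ω → β} {W : Ω → γ} (hindep : IndepFun Z W μ)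
    (hZ : Measurable Z) (hW : Measurable W) {s : Set β} {t : Set γ} (hs : MeasurableSet s)
    (ht : MeasurableSet t) {f : γ → ℝ} (hf : Measurable f) (hZs : μ (Z ⁻¹' s) ≠ 0) :
    cexp μ (f ∘ W) (Z ⁻¹' s ∩ W ⁻¹' t) = cexp μ (f ∘ W) (W ⁻¹' t) := by
  have hint : ∫ ω in Z ⁻¹' s ∩ W ⁻¹' t, f (W ω) ∂μ
      = μ.real (Z ⁻¹' s) * ∫ ω in W ⁻¹' t, f (W ω) ∂μ := by
    have := ((IndepFun_iff_Indep Z W μ).1 hindep).setIntegral_eq_mul (f := t.indicator f)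
      hZ.comap_le hW.aemeasurable ⟨s, hs, rfl⟩ (hf.indicator ht).aestronglyMeasurable
    simp only [← Set.indicator_comp_right] at this
    rwa [setIntegral_indicator (hW ht), integral_indicator (hW ht)] at this
  have hmeas : μ.real (Z ⁻¹' s ∩ W ⁻¹' t) = μ.real (Z ⁻¹' s) * μ.real (W ⁻¹' t) := by
    simp only [Measure.real, hindep.measure_inter_preimage_eq_mul _ _ hs ht, ENNReal.toReal_mul]
  have hZs' : μ.real (Z ⁻¹' s) ≠ 0 := by
    simpa [Measure.real, ENNReal.toReal_eq_zero_iff, measure_ne_top] using hZs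
  simp only [cexp, Pr, Function.comp_apply]
  exact (congrArg₂ (· / ·) hint hmeas).trans (mul_div_mul_left _ _ hZs')

lemma cexp_eq_of_measure_preimage_inter_mul_eq [IsFiniteMeasure μ] {Y : Ω → ℝ}
    (hY : Measurable Y) {C D : Set Ω}
    (h : ∀ B, MeasurableSet B → μ (Y ⁻¹' B ∩ D) * μ C = μ (Y ⁻¹' B ∩ C) * μ D)
    (hC : μ C ≠ 0) (hD : μ D ≠ 0) : cexp μ Y D = cexp μ Y C := by
  have hlaw : μ C • (μ.restrict D).map Y = μ D • (μ.restrict C).map Y := by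
    ext B hB
    simp only [Measure.smul_apply, Measure.map_apply hY hB, Measure.restrict_apply (hY hB),
      smul_eq_mul, mul_comm (μ C), mul_comm (μ D)]
    exact h B hB
  have hmean := congrArg (fun ν => ∫ y, y ∂ν) hlaw
  simp only [integral_smul_measure, smul_eq_mul] at hmean
  rw [integral_map (f := fun y => y) hY.aemeasurable aestronglyMeasurable_id,
    integral_map (f := fun y => y) hY.aemeasurable aestronglyMeasurable_id] at hmean
  have hC' : (μ C).toReal ≠ 0 := ENNReal.toReal_ne_zero.2 ⟨hC, measure_ne_top μ C⟩
  have hD' : (μ D).toReal ≠ 0 := ENNReal.toReal_ne_zero.2 ⟨hD, measure_ne_top μ D⟩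
  rw [cexp, cexp, Pr, Pr, div_eq_div_iff hD' hC']
  linarith

lemma measure_stratum_ne_zero_of_Pr_arm_pos {α : Type*} {X : Ω → α} {Z S Sz : Ω → ℝ}
    {z s : ℝ} {x : α} (hS : ∀ ω, Z ω = z → S ω = Sz ω)
    (hpos : 0 < Pr μ {ω | Z ω = z ∧ S ω = s ∧ X ω = x}) : μ {ω | X ω = x ∧ Sz ω = s} ≠ 0 :=
  fun h => measure_ne_zero_of_Pr_pos hpos
    (measure_mono_null ((setOf_arm_eq hS).subset.trans Set.inter_subset_right) h)

lemma cexp_arm_eq_cexp_stratum {α : Type*} [MeasurableSpace α] [MeasurableSingletonClass α]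
    [IsFiniteMeasure μ] {X : Ω → α} {Z S Sz Y Yz : Ω → ℝ} {z s : ℝ} {x : α}
    (hindep : IndepFun Z (fun ω => (X ω, Sz ω, Yz ω)) μ)
    (hZ : Measurable Z) (hX : Measurable X) (hSz : Measurable Sz) (hYz : Measurable Yz)
    (hS : ∀ ω, Z ω = z → S ω = Sz ω) (hY : ∀ ω, Z ω = z → Y ω = Yz ω)
    (hpos : 0 < Pr μ {ω | Z ω = z ∧ S ω = s ∧ X ω = x}) :
    cexp μ Y {ω | Z ω = z ∧ S ω = s ∧ X ω = x} = cexp μ Yz {ω | X ω = x ∧ Sz ω = s} := by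
  have hZz : μ (Z ⁻¹' {z}) ≠ 0 := fun h => measure_ne_zero_of_Pr_pos hpos
    (measure_mono_null ((setOf_arm_eq hS).subset.trans Set.inter_subset_left) h)
  have hstratum : MeasurableSet {ω | X ω = x ∧ Sz ω = s} :=
    (hX (measurableSet_singleton x)).inter (hSz (measurableSet_singleton s))
  rw [setOf_arm_eq hS]
  calc cexp μ Y (Z ⁻¹' {z} ∩ {ω | X ω = x ∧ Sz ω = s})
      = cexp μ Yz (Z ⁻¹' {z} ∩ {ω | X ω = x ∧ Sz ω = s}) :=
        cexp_congr_ae ((hZ (measurableSet_singleton z)).inter hstratum)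
          (ae_of_all _ fun ω hω => hY ω hω.1)
    _ = cexp μ Yz {ω | X ω = x ∧ Sz ω = s} :=
        hindep.cexp_preimage_inter (f := fun p => p.2.2) (t := {p | p.1 = x ∧ p.2.1 = s})
          hZ (by fun_prop) (measurableSet_singleton z) (by measurability) (by fun_prop) hZz

lemma stratum_ae_eq_inter_of_ae_le {α : Type*} {X : Ω → α} {S0 S1 : Ω → ℝ} {x : α}
    (hS1 : ∀ ω, 0 ≤ S1 ω) (hmono : ∀ᵐ ω ∂μ, S1 ω ≤ S0 ω) :
    {ω | X ω = x ∧ S0 ω = 0} =ᵐ[μ] ({ω | S0 ω = 0} ∩ {ω | X ω = x ∧ S1 ω = 0} : Set Ω) := by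
  refine Filter.eventuallyEq_set.2 ?_
  filter_upwards [hmono] with ω hle
  rcases (hS1 ω).eq_or_lt with h | h
  · simp [← h, and_comm]
  · simp [h.ne', (h.trans_le hle).ne']

end Cexp

theorem er_and_ppi_imply_mean_independence_general
    {Ω : Type*} [MeasurableSpace Ω] (μ : Measure Ω) [IsProbabilityMeasure μ]
    (X : Ω → ℕ) (Z S0 S1 Y0 Y1 S Y : Ω → ℝ)
    (hXm : Measurable X) (hZm : Measurable Z)
    (hS0m : Measurable S0) (hS1m : Measurable S1)
    (hY0m : Measurable Y0) (hY1m : Measurable Y1)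
    (hS1 : ∀ ω, S1 ω = 0 ∨ S1 ω = 1)
    (hindep : IndepFun Z (fun ω => (X ω, S0 ω, S1 ω, Y0 ω, Y1 ω)) μ)
    (hconsS : ∀ ω, S ω = if Z ω = 1 then S1 ω else S0 ω)
    (hconsY : ∀ ω, Y ω = if Z ω = 1 then Y1 ω else Y0 ω)
    (hmono : ∀ᵐ ω ∂μ, S1 ω ≤ S0 ω)
    -- exclusion restriction: Y(1) = Y(0) a.s. on {S(0)=0}
    (hER : ∀ᵐ ω ∂μ, S0 ω = 0 → Y1 ω = Y0 ω)
    -- partial principal ignorability: Y(1) ⫫ S(0) given (X = x, S(1) = 0)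
    (hPPI : ∀ (x : ℕ) (B : Set ℝ), MeasurableSet B → ∀ s₀ : ℝ,
      μ ({ω | Y1 ω ∈ B ∧ S0 ω = s₀} ∩ {ω | X ω = x ∧ S1 ω = 0})
          * μ {ω | X ω = x ∧ S1 ω = 0}
        = μ ({ω | Y1 ω ∈ B} ∩ {ω | X ω = x ∧ S1 ω = 0})
          * μ ({ω | S0 ω = s₀} ∩ {ω | X ω = x ∧ S1 ω = 0})) :
    ∀ x : ℕ,
      0 < Pr μ {ω | Z ω = 1 ∧ S ω = 0 ∧ X ω = x} →
      0 < Pr μ {ω | Z ω = 0 ∧ S ω = 0 ∧ X ω = x} →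
      cexp μ Y {ω | Z ω = 1 ∧ S ω = 0 ∧ X ω = x}
        = cexp μ Y {ω | Z ω = 0 ∧ S ω = 0 ∧ X ω = x} := by
  intro x h1pos h0pos
  have hS_of_Z1 (ω) (h : Z ω = 1) : S ω = S1 ω := by simp [hconsS, h]
  have hS_of_Z0 (ω) (h : Z ω = 0) : S ω = S0 ω := by simp [hconsS, h]
  have hY_of_Z1 (ω) (h : Z ω = 1) : Y ω = Y1 ω := by simp [hconsY, h]
  have hY_of_Z0 (ω) (h : Z ω = 0) : Y ω = Y0 ω := by simp [hconsY, h]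
  have hindep1 : IndepFun Z (fun ω => (X ω, S1 ω, Y1 ω)) μ :=
    hindep.comp (ψ := fun p : ℕ × ℝ × ℝ × ℝ × ℝ => (p.1, p.2.2.1, p.2.2.2.2))
      measurable_id (by fun_prop)
  have hindep0 : IndepFun Z (fun ω => (X ω, S0 ω, Y0 ω)) μ :=
    hindep.comp (ψ := fun p : ℕ × ℝ × ℝ × ℝ × ℝ => (p.1, p.2.1, p.2.2.2.1))
      measurable_id (by fun_prop)
  rw [cexp_arm_eq_cexp_stratum hindep1 hZm hXm hS1m hY1m hS_of_Z1 hY_of_Z1 h1pos,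
    cexp_arm_eq_cexp_stratum hindep0 hZm hXm hS0m hY0m hS_of_Z0 hY_of_Z0 h0pos]
  have hC0_ae := stratum_ae_eq_inter_of_ae_le (μ := μ) (X := X) (x := x)
    (fun ω => by rcases hS1 ω with h | h <;> simp [h]) hmono
  calc cexp μ Y1 {ω | X ω = x ∧ S1 ω = 0}
      = cexp μ Y1 ({ω | S0 ω = 0} ∩ {ω | X ω = x ∧ S1 ω = 0}) :=
        (cexp_eq_of_measure_preimage_inter_mul_eq hY1m
          (fun B hB => by rw [← Set.inter_assoc]; exact hPPI x B hB 0)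
          (measure_stratum_ne_zero_of_Pr_arm_pos hS_of_Z1 h1pos)
          (measure_congr hC0_ae ▸ measure_stratum_ne_zero_of_Pr_arm_pos hS_of_Z0 h0pos)).symm
    _ = cexp μ Y1 {ω | X ω = x ∧ S0 ω = 0} := cexp_congr_set hC0_ae.symm
    _ = cexp μ Y0 {ω | X ω = x ∧ S0 ω = 0} :=
        cexp_congr_ae
          ((hXm (measurableSet_singleton x)).inter (hS0m (measurableSet_singleton 0)))
          (by filter_upwards [hER] with ω h hω using h hω.2)

/-- If both the exclusion restriction and partial principal ignorability hold, then the
observed outcome is conditionally mean-independent of vaccination given `(S=0, X)`. -/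
theorem er_and_ppi_imply_mean_independence
    {Ω : Type*} [MeasurableSpace Ω] (μ : Measure Ω) [IsProbabilityMeasure μ]
    (X : Ω → ℕ) (Z S0 S1 Y0 Y1 S Y : Ω → ℝ)
    (hXm : Measurable X) (hZm : Measurable Z)
    (hS0m : Measurable S0) (hS1m : Measurable S1)
    (hY0m : Measurable Y0) (hY1m : Measurable Y1)
    (hZ : ∀ ω, Z ω = 0 ∨ Z ω = 1)
    (hS0 : ∀ ω, S0 ω = 0 ∨ S0 ω = 1) (hS1 : ∀ ω, S1 ω = 0 ∨ S1 ω = 1)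
    (hindep : IndepFun Z (fun ω => (X ω, S0 ω, S1 ω, Y0 ω, Y1 ω)) μ)
    (hconsS : ∀ ω, S ω = if Z ω = 1 then S1 ω else S0 ω)
    (hconsY : ∀ ω, Y ω = if Z ω = 1 then Y1 ω else Y0 ω)
    (hmono : ∀ᵐ ω ∂μ, S1 ω ≤ S0 ω)
    (hint0 : Integrable Y0 μ) (hint1 : Integrable Y1 μ)
    -- exclusion restriction: Y(1) = Y(0) a.s. on {S(0)=0}
    (hER : ∀ᵐ ω ∂μ, S0 ω = 0 → Y1 ω = Y0 ω)
    -- partial principal ignorability: Y(1) ⫫ S(0) given (X = x, S(1) = 0)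
    (hPPI : ∀ (x : ℕ) (B : Set ℝ), MeasurableSet B → ∀ s₀ : ℝ,
      μ ({ω | Y1 ω ∈ B ∧ S0 ω = s₀} ∩ {ω | X ω = x ∧ S1 ω = 0})
          * μ {ω | X ω = x ∧ S1 ω = 0}
        = μ ({ω | Y1 ω ∈ B} ∩ {ω | X ω = x ∧ S1 ω = 0})
          * μ ({ω | S0 ω = s₀} ∩ {ω | X ω = x ∧ S1 ω = 0})) :
    ∀ x : ℕ,
      0 < Pr μ {ω | Z ω = 1 ∧ S ω = 0 ∧ X ω = x} →
      0 < Pr μ {ω | Z ω = 0 ∧ S ω = 0 ∧ X ω = x} →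
      cexp μ Y {ω | Z ω = 1 ∧ S ω = 0 ∧ X ω = x}
        = cexp μ Y {ω | Z ω = 0 ∧ S ω = 0 ∧ X ω = x} :=
  er_and_ppi_imply_mean_independence_general μ X Z S0 S1 Y0 Y1 S Y hXm hZm hS0m hS1m hY0m hY1m hS1
    hindep hconsS hconsY hmono hER hPPI
end
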